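/- arXiv:1309.4192 — 8 statements merged into one kernel-verified Lean document; each statement's English description precedes it below -/
import Mathlib

section
/- Let Γ be a finite simple graph with vertex set V, and let G_Γ be the right-angled Artin group presented with one generator x_v for each vertex v ∈ V and one relator x_u x_v x_u⁻¹ x_v⁻¹ for each edge {u, v} of Γ. Let K₁ and K₂ be disjoint cliques in Γ (disjoint sets of vertices, each pairwise adjacent), and let A ≤ G_Γ be the subgroup generated by {x_v : v ∈ K₁} and B ≤ G_Γ the subgroup generated by {x_v : v ∈ K₂}. Then for every g ∈ G_Γ, the conjugate subgroup gAg⁻¹ intersects B trivially: gAg⁻¹ ∩ B = {1}. -/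
/-- The defining relators of the right-angled Artin group of a simple graph: one commutator
`x_u x_v x_u⁻¹ x_v⁻¹` for each edge `{u, v}`. -/
def raagRels {V : Type} (Γ : SimpleGraph V) : Set (FreeGroup V) :=
  {r | ∃ u v : V, Γ.Adj u v ∧
    r = FreeGroup.of u * FreeGroup.of v * (FreeGroup.of u)⁻¹ * (FreeGroup.of v)⁻¹}

/-- The right-angled Artin group of a simple graph. -/
abbrev RAAG {V : Type} (Γ : SimpleGraph V) : Type := PresentedGroup (raagRels Γ)

/-- The abelianization map to `Multiplicative (V →₀ ℤ)`. -/
noncomputable def raagAb {V : Type} (Γ : SimpleGraph V) : RAAG Γ →* Multiplicative (V →₀ ℤ) :=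
  PresentedGroup.toGroup (f := fun v => Multiplicative.ofAdd (Finsupp.single v (1 : ℤ)))
    (by
      rintro r ⟨u, v, huv, rfl⟩
      simp only [map_mul, map_inv, FreeGroup.lift_apply_of]
      rw [← commutatorElement_def, commutatorElement_eq_one_iff_commute]
      exact Commute.all _ _)

lemma raagAb_of {V : Type} (Γ : SimpleGraph V) (v : V) :
    raagAb Γ (PresentedGroup.of v) = Multiplicative.ofAdd (Finsupp.single v (1 : ℤ)) :=
  PresentedGroup.toGroup.of _

lemma raagAb_support {V : Type} (Γ : SimpleGraph V) (K : Set V) :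
    ∀ a ∈ Subgroup.closure ((PresentedGroup.of : V → RAAG Γ) '' K),
      ↑((raagAb Γ a).toAdd.support) ⊆ K := by
  classical
  intro a ha
  induction ha using Subgroup.closure_induction with
  | mem x hx =>
    obtain ⟨v, hv, rfl⟩ := hx
    rw [raagAb_of]
    simp only [toAdd_ofAdd]
    intro w hw
    have := Finsupp.support_single_subset (Finset.mem_coe.mp hw)
    rw [Finset.mem_singleton] at this
    subst this; exact hv
  | one => simp
  | mul x y hx hy ihx ihy =>
    rw [map_mul, toAdd_mul]
    intro w hw
    rcases Finset.mem_union.mp (Finsupp.support_add (Finset.mem_coe.mp hw)) with h | h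
    · exact ihx (Finset.mem_coe.mpr h)
    · exact ihy (Finset.mem_coe.mpr h)
  | inv x hx ihx =>
    rw [map_inv, toAdd_inv, Finsupp.support_neg]
    exact ihx

lemma raagAb_injOn_clique {V : Type} (Γ : SimpleGraph V) (K : Set V) (hK : Γ.IsClique K) :
    ∀ a ∈ Subgroup.closure ((PresentedGroup.of : V → RAAG Γ) '' K),
      raagAb Γ a = 1 → a = 1 := by
  classical
  -- the generators corresponding to a clique commute
  have hcomm : ∀ x ∈ (PresentedGroup.of : V → RAAG Γ) '' K,
      ∀ y ∈ (PresentedGroup.of : V → RAAG Γ) '' K, x * y = y * x := by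
    rintro _ ⟨u, hu, rfl⟩ _ ⟨v, hv, rfl⟩
    by_cases huv : u = v
    · subst huv; rfl
    · have hadj : Γ.Adj u v := hK hu hv huv
      have hrel : (PresentedGroup.mk (raagRels Γ))
          (FreeGroup.of u * FreeGroup.of v * (FreeGroup.of u)⁻¹ * (FreeGroup.of v)⁻¹) = 1 := by
        exact (QuotientGroup.eq_one_iff _).mpr
          (Subgroup.subset_normalClosure ⟨u, v, hadj, rfl⟩)
      rw [map_mul, map_mul, map_mul, map_inv, map_inv] at hrel
      rw [mul_inv_eq_one, mul_inv_eq_iff_eq_mul] at hrel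
      exact hrel
  set C := Subgroup.closure ((PresentedGroup.of : V → RAAG Γ) '' K) with hC
  letI : CommGroup C := Subgroup.closureCommGroupOfComm hcomm
  -- retraction from the abelianization back to C
  let e : V → Additive C := fun v =>
    if h : v ∈ K then
      Additive.ofMul (⟨PresentedGroup.of v, Subgroup.subset_closure ⟨v, h, rfl⟩⟩ : C)
    else 0
  let τ : (V →₀ ℤ) →+ Additive C := Finsupp.liftAddHom fun v => zmultiplesHom (Additive C) (e v)
  have key : ∀ a (ha : a ∈ C), τ (raagAb Γ a).toAdd = Additive.ofMul (⟨a, ha⟩ : C) := by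
    intro a ha
    induction ha using Subgroup.closure_induction with
    | mem x hx =>
      obtain ⟨v, hv, rfl⟩ := hx
      rw [raagAb_of]
      have : τ (Finsupp.single v (1 : ℤ)) = e v := by
        simp [τ]
      simp only [toAdd_ofAdd]
      rw [this]
      simp only [e, dif_pos hv]
    | one =>
      rw [map_one]
      show τ 0 = _
      rw [map_zero]
      rfl
    | mul x y hx hy ihx ihy =>
      rw [map_mul, toAdd_mul, map_add, ihx, ihy]
      rfl
    | inv x hx ihx =>
      rw [map_inv, toAdd_inv, map_neg, ihx]
      rfl
  intro a ha h1
  have := key a ha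
  rw [h1] at this
  have h0 : τ (Multiplicative.toAdd (1 : Multiplicative (V →₀ ℤ))) = 0 := by
    show τ 0 = 0; exact map_zero τ
  rw [h0] at this
  have : (⟨a, ha⟩ : C) = 1 := by
    have := this.symm
    exact Additive.ofMul.injective (by simpa using this)
  exact congrArg Subtype.val this

/-- If `K₁` and `K₂` are disjoint cliques in a finite simple graph `Γ`, and `A`, `B` are the
subgroups of the right-angled Artin group `G_Γ` generated by the corresponding generators,
then every conjugate of `A` intersects `B` trivially. -/
theorem stmt_5 {V : Type} [Fintype V] (Γ : SimpleGraph V)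
    (K₁ K₂ : Set V) (hd : Disjoint K₁ K₂)
    (h₁ : Γ.IsClique K₁) (h₂ : Γ.IsClique K₂) :
    ∀ g : RAAG Γ,
      Subgroup.map (MulAut.conj g).toMonoidHom
          (Subgroup.closure (PresentedGroup.of '' K₁)) ⊓
        Subgroup.closure (PresentedGroup.of '' K₂) = ⊥ := by
  intro g
  rw [eq_bot_iff]
  rintro x ⟨hxA, hxB⟩
  obtain ⟨a, ha, rfl⟩ := hxA
  have hconj : (MulAut.conj g).toMonoidHom a = g * a * g⁻¹ := rfl
  -- abelianization kills conjugation
  have hab : raagAb Γ ((MulAut.conj g).toMonoidHom a) = raagAb Γ a := by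
    rw [hconj, map_mul, map_mul, map_inv, mul_comm (raagAb Γ g) (raagAb Γ a),
      mul_inv_cancel_right]
  have hs1 : ↑((raagAb Γ a).toAdd.support) ⊆ K₁ := raagAb_support Γ K₁ a ha
  have hs2 : ↑((raagAb Γ a).toAdd.support) ⊆ K₂ := by
    rw [← hab]; exact raagAb_support Γ K₂ _ hxB
  have hsupp : (raagAb Γ a).toAdd.support = ∅ := by
    have : ↑((raagAb Γ a).toAdd.support) ⊆ (∅ : Set V) := by
      intro v hv
      exact (Set.disjoint_iff.mp hd) ⟨hs1 hv, hs2 hv⟩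
    exact_mod_cast Set.subset_empty_iff.mp this
  have hone : raagAb Γ a = 1 := by
    have : (raagAb Γ a).toAdd = 0 := Finsupp.support_eq_empty.mp hsupp
    simpa using this
  have ha1 : a = 1 := raagAb_injOn_clique Γ K₁ h₁ a ha hone
  rw [ha1]
  simp
end

section
/- Let F be the free group on two generators α and β. Then for every g ∈ F, the conjugate of the cyclic subgroup generated by α intersects the cyclic subgroup generated by β trivially: g⟨α⟩g⁻¹ ∩ ⟨β⟩ = {1}. -/
/-- In the free group on two generators `α` (= `FreeGroup.of true`) and
`β` (= `FreeGroup.of false`), every conjugate of the cyclic subgroup `⟨α⟩` intersects the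
cyclic subgroup `⟨β⟩` trivially. -/
theorem stmt_7 (g : FreeGroup Bool) :
    Subgroup.map (MulAut.conj g).toMonoidHom
        (Subgroup.zpowers (FreeGroup.of true)) ⊓
      Subgroup.zpowers (FreeGroup.of false) = ⊥ := by
  rw [Subgroup.eq_bot_iff_forall]
  rintro x ⟨⟨y, ⟨n, rfl⟩, rfl⟩, m, hm⟩
  set φ : FreeGroup Bool →* Multiplicative ℤ :=
    FreeGroup.lift (fun b => Multiplicative.ofAdd (if b then (1 : ℤ) else 0)) with hφ
  have h1 : φ ((MulAut.conj g).toMonoidHom (FreeGroup.of true ^ n)) = Multiplicative.ofAdd (n : ℤ) := by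
    simp [hφ, mul_assoc, mul_comm, ← ofAdd_zsmul]
  have h2 : φ (FreeGroup.of false ^ m) = 1 := by
    simp [hφ, ← ofAdd_zsmul]
  have hn : (n : ℤ) = 0 := by
    have := congrArg φ hm
    rw [h1, h2] at this
    simpa using this.symm
  simp [hn]
end

section
/- Let G be the group presented by ⟨a, b, c | [a,[b⁻¹,c]], [b,[c⁻¹,a]]⟩ (the fundamental group of the Borromean rings link complement), and let p : G → F(α, β) be the homomorphism to the free group on two generators determined by p(a) = α, p(b) = β, p(c) = 1. Let A = ⟨a⟩ be the cyclic subgroup of G generated by a, and let B = p⁻¹(⟨β⟩) be the preimage of the cyclic subgroup generated by β. Then for every g ∈ G, the conjugate subgroup gAg⁻¹ intersects B trivially: gAg⁻¹ ∩ B = {1}. -/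
open scoped commutatorElement

/-- The relators `[a,[b⁻¹,c]]` and `[b,[c⁻¹,a]]` of the Borromean rings group, where
`a = FreeGroup.of 0`, `b = FreeGroup.of 1`, `c = FreeGroup.of 2` and `⁅x, y⁆ = xyx⁻¹y⁻¹`. -/
def borromeanRels : Set (FreeGroup (Fin 3)) :=
  {⁅FreeGroup.of (0 : Fin 3), ⁅(FreeGroup.of (1 : Fin 3))⁻¹, FreeGroup.of (2 : Fin 3)⁆⁆,
   ⁅FreeGroup.of (1 : Fin 3), ⁅(FreeGroup.of (2 : Fin 3))⁻¹, FreeGroup.of (0 : Fin 3)⁆⁆}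

/-- The fundamental group of the Borromean rings link complement,
`G = ⟨a, b, c ∣ [a,[b⁻¹,c]], [b,[c⁻¹,a]]⟩`. -/
abbrev BorromeanGroup : Type := PresentedGroup borromeanRels

/-!
The exponent sum of `α` is a homomorphism `F(α, β) → ℤ` killing `⟨β⟩` and sending `α` to `1`.
Composed with `p` it kills `B` and every conjugate of `a` has image `1`, so the only element
of `g ⟨a⟩ g⁻¹` lying in `B` is `g a⁰ g⁻¹ = 1`.
-/

theorem Subgroup.map_conj_zpowers_inf_eq_bot_of_le_ker {G H : Type*} [Group G] [Group H]
    (φ : G →* H) {a : G} (ha : ¬IsOfFinOrder (φ a)) {K : Subgroup G} (hK : K ≤ φ.ker)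
    (g : G) : (zpowers a).map (MulAut.conj g).toMonoidHom ⊓ K = ⊥ := by
  rw [eq_bot_iff]
  rintro _ ⟨⟨_, ⟨n, rfl⟩, rfl⟩, hK_mem⟩
  have h_one : φ a ^ n = φ a ^ (0 : ℤ) := by
    simpa [mul_eq_one_iff_eq_inv, mul_inv_eq_one] using hK hK_mem
  obtain rfl : n = 0 := injective_zpow_iff_not_isOfFinOrder.mpr ha h_one
  simp

namespace FreeGroup

variable {α : Type*} [DecidableEq α]

def exponentSum (x : α) : FreeGroup α →* Multiplicative ℤ :=
  FreeGroup.lift (Pi.mulSingle x (Multiplicative.ofAdd 1))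

theorem exponentSum_of_self (x : α) : exponentSum x (of x) = Multiplicative.ofAdd 1 := by
  simp [exponentSum]

theorem zpowers_of_le_ker_exponentSum {x y : α} (h : y ≠ x) :
    Subgroup.zpowers (of y) ≤ (exponentSum x).ker := by
  rw [Subgroup.zpowers_le, MonoidHom.mem_ker]
  simp [exponentSum, Pi.mulSingle_eq_of_ne h]

end FreeGroup

theorem stmt_8_general (p : BorromeanGroup →* FreeGroup Bool)
    (hpa : p (PresentedGroup.of 0) = FreeGroup.of true) :
    ∀ g : BorromeanGroup,
      Subgroup.map (MulAut.conj g).toMonoidHom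
          (Subgroup.zpowers (PresentedGroup.of 0)) ⊓
        Subgroup.comap p (Subgroup.zpowers (FreeGroup.of false)) = ⊥ := by
  have h_infinite : ¬IsOfFinOrder ((FreeGroup.exponentSum true).comp p (PresentedGroup.of 0)) := by
    rw [MonoidHom.comp_apply, hpa, FreeGroup.exponentSum_of_self]
    exact not_isOfFinOrder_of_isMulTorsionFree (by decide)
  have h_ker : (Subgroup.zpowers (FreeGroup.of false)).comap p
      ≤ ((FreeGroup.exponentSum true).comp p).ker := by
    rw [← MonoidHom.comap_ker]
    exact Subgroup.comap_mono (FreeGroup.zpowers_of_le_ker_exponentSum Bool.false_ne_true)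
  exact Subgroup.map_conj_zpowers_inf_eq_bot_of_le_ker _ h_infinite h_ker

/-- Let `p : G → F(α, β)` be the homomorphism with `p(a) = α`, `p(b) = β`, `p(c) = 1`
(where `α = FreeGroup.of true`, `β = FreeGroup.of false`). If `A = ⟨a⟩` and
`B = p⁻¹(⟨β⟩)`, then every conjugate of `A` intersects `B` trivially. -/
theorem stmt_8 (p : BorromeanGroup →* FreeGroup Bool)
    (hpa : p (PresentedGroup.of 0) = FreeGroup.of true)
    (hpb : p (PresentedGroup.of 1) = FreeGroup.of false)
    (hpc : p (PresentedGroup.of 2) = 1) :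
    ∀ g : BorromeanGroup,
      Subgroup.map (MulAut.conj g).toMonoidHom
          (Subgroup.zpowers (PresentedGroup.of 0)) ⊓
        Subgroup.comap p (Subgroup.zpowers (FreeGroup.of false)) = ⊥ :=
  stmt_8_general p hpa
end

section
/- Let G be the group presented by ⟨a, b, c | [a,[b⁻¹,c]], [b,[c⁻¹,a]]⟩ (the fundamental group of the Borromean rings link complement), let p : G → F(α, β) be the homomorphism to the free group on two generators determined by p(a) = α, p(b) = β, p(c) = 1, and let B = p⁻¹(⟨β⟩). Then B is not a free group: there is no type ι for which B is isomorphic as a group to the free group on ι. -/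
/-!
Suppose `B` were free. The second relator says that `b` commutes with `t = [c⁻¹, a]`, and both lie
in `B`; in a free group commuting elements generate a free abelian, hence cyclic, subgroup, so
`b = uᵐ` and `t = uⁿ` for some `u ∈ B`. Killing `b` maps `G` onto the free group on `a` and `c`,
where `t` becomes the nontrivial element `[c⁻¹, a]`. As free groups are torsion-free, the image of
`u` is trivial unless `m = 0`; the first is impossible since `t` survives, the second makes `b`
trivial, contradicting `p b = β`.
-/

open scoped commutatorElement

namespace FreeGroup

theorem eq_of_commute_of {α : Type*} {i j : α} (h : Commute (of i) (of j)) : i = j := by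
  classical
  by_contra hij
  have h' := h.map (map fun k => decide (k = i))
  simp only [map.of, decide_true, Ne.symm hij, decide_false] at h'
  exact absurd h'.eq (by decide)

end FreeGroup

namespace IsFreeGroup

theorem isCyclic_of_isMulCommutative (G : Type*) [Group G] [IsFreeGroup G] [IsMulCommutative G] :
    IsCyclic G := by
  have : Subsingleton (Generators G) := ⟨fun i j => FreeGroup.eq_of_commute_of <| by
    simpa using Commute.map (mul_comm' (mulEquiv G (.of i)) (mulEquiv G (.of j))) (mulEquiv G).symm⟩
  rw [← (mulEquiv G).isCyclic]
  cases isEmpty_or_nonempty (Generators G)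
  · infer_instance
  · have : Unique (Generators G) := uniqueOfSubsingleton (Classical.arbitrary _)
    infer_instance

theorem exists_mem_zpowers_of_commute {G : Type*} [Group G] [IsFreeGroup G] {x y : G}
    (h : Commute x y) : ∃ u, x ∈ Subgroup.zpowers u ∧ y ∈ Subgroup.zpowers u := by
  set H := Subgroup.closure {x, y}
  have : IsMulCommutative H := Subgroup.isMulCommutative_closure <| by
    rintro _ (rfl | rfl) _ (rfl | rfl)
    exacts [rfl, h.eq, h.symm.eq, rfl]
  obtain ⟨g, hg⟩ := (isCyclic_of_isMulCommutative H).exists_generator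
  obtain ⟨m, hm⟩ := hg ⟨x, Subgroup.subset_closure (Set.mem_insert _ _)⟩
  obtain ⟨n, hn⟩ := hg ⟨y, Subgroup.subset_closure (Set.mem_insert_of_mem _ rfl)⟩
  exact ⟨g, ⟨m, congrArg Subtype.val hm⟩, ⟨n, congrArg Subtype.val hn⟩⟩

end IsFreeGroup

theorem eq_one_of_mem_zpowers_of_map_eq_one {G H : Type*} [Group G] [Group H] [IsMulTorsionFree H]
    (q : G →* H) {u x y : G} (hx : x ∈ Subgroup.zpowers u) (hy : y ∈ Subgroup.zpowers u)
    (hqx : q x = 1) (hqy : q y ≠ 1) : x = 1 := by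
  obtain ⟨m, rfl⟩ := hx
  obtain ⟨n, rfl⟩ := hy
  rw [map_zpow, IsMulTorsionFree.zpow_eq_one_iff] at hqx
  rcases hqx with hu | rfl
  · simp [hu] at hqy
  · exact zpow_zero u

namespace BorromeanGroup

theorem commute_b_commutator_cInv_a :
    Commute (PresentedGroup.of 1 : BorromeanGroup)
      ⁅(PresentedGroup.of 2 : BorromeanGroup)⁻¹, PresentedGroup.of 0⁆ := by
  have h := PresentedGroup.one_of_mem (rels := borromeanRels) (Set.mem_insert_of_mem _ rfl)
  simp only [map_commutatorElement, map_inv] at h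
  exact commutatorElement_eq_one_iff_mul_comm.mp h

def killB : BorromeanGroup →* FreeGroup Bool :=
  PresentedGroup.toGroup (f := ![FreeGroup.of true, 1, FreeGroup.of false]) <| by
    rintro _ (rfl | rfl) <;> simp

theorem killB_b : killB (PresentedGroup.of 1) = 1 := PresentedGroup.toGroup.of _

theorem killB_commutator_cInv_a_ne_one :
    killB ⁅(PresentedGroup.of 2 : BorromeanGroup)⁻¹, PresentedGroup.of 0⁆ ≠ 1 := by
  simp only [killB, map_commutatorElement, map_inv, PresentedGroup.toGroup.of]
  decide

end BorromeanGroup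

/-- Let `p : G → F(α, β)` be the homomorphism with `p(a) = α`, `p(b) = β`, `p(c) = 1`
(where `α = FreeGroup.of true`, `β = FreeGroup.of false`). Then `B = p⁻¹(⟨β⟩)` is not a
free group: it is not isomorphic to the free group on any type. -/
theorem stmt_9 (p : BorromeanGroup →* FreeGroup Bool)
    (hpa : p (PresentedGroup.of 0) = FreeGroup.of true)
    (hpb : p (PresentedGroup.of 1) = FreeGroup.of false)
    (hpc : p (PresentedGroup.of 2) = 1) :
    ¬ ∃ ι : Type,
      Nonempty (↥(Subgroup.comap p (Subgroup.zpowers (FreeGroup.of false))) ≃* FreeGroup ι) := by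
  rintro ⟨ι, ⟨e⟩⟩
  set B := Subgroup.comap p (Subgroup.zpowers (FreeGroup.of false))
  have : IsFreeGroup B := .ofMulEquiv e.symm
  have hbB : PresentedGroup.of 1 ∈ B := by simp [B, hpb]
  have htB : ⁅(PresentedGroup.of 2 : BorromeanGroup)⁻¹, PresentedGroup.of 0⁆ ∈ B := by
    simp [B, map_commutatorElement, hpa, hpc]
  obtain ⟨u, hbu, htu⟩ := IsFreeGroup.exists_mem_zpowers_of_commute
    (x := ⟨_, hbB⟩) (y := ⟨_, htB⟩) (Subtype.ext BorromeanGroup.commute_b_commutator_cInv_a.eq)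
  have hb : (⟨_, hbB⟩ : B) = 1 := eq_one_of_mem_zpowers_of_map_eq_one
    (BorromeanGroup.killB.comp B.subtype) hbu htu BorromeanGroup.killB_b
    BorromeanGroup.killB_commutator_cInv_a_ne_one
  have hpb1 := congrArg (p ∘ Subtype.val) hb
  simp only [Function.comp_apply, hpb, OneMemClass.coe_one, map_one] at hpb1
  exact FreeGroup.of_ne_one _ hpb1
end

section
/- Let A and B be groups and let G = A ∗ B be their free product (coproduct of groups). Suppose G acts by automorphisms on a tree X (a connected acyclic simple graph), suppose v and w are adjacent vertices of X such that a • v = v for all a ∈ A and b • w = w for all b ∈ B, while a • w ≠ w for every a ∈ A with a ≠ 1 and b • v ≠ v for every b ∈ B with b ≠ 1. Then every element g ∈ G that is not conjugate in G to an element of the image of A or of the image of B fixes no vertex of X: for every vertex u, g • u ≠ u. -/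
/-!
Write elements of `A ∗ B` as words in the letters of `A ⊕ B` and pick a word of minimal length;
minimality forces its letters to be nontrivial and to alternate between the two factors. Call a
vertex closer to `v` than to `w` an `A`-side vertex, and the others `B`-side vertices. A
nontrivial `a ∈ A` fixes `v` and moves `w` to another neighbour of `v`, so it sends every `B`-side
vertex to an `A`-side vertex one step further from the edge `vw`, and symmetrically for `B`
(ping-pong). Hence a minimal word whose last letter is in the factor opposite to the side of `x`
moves `x` away from `vw` by its length. If the first and last letters lie in different factors,
every vertex meets this condition for the word or for its inverse, so no vertex is fixed. Otherwise
conjugating by the first letter shortens the word, and induction on the length shows that an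
element fixing a vertex is conjugate to a single letter.
-/

namespace SimpleGraph

variable {V : Type*} {G : SimpleGraph V}

theorem IsTree.eq_of_adj_of_dist_add_one_eq (hG : G.IsTree) {x p q q' : V} (hq : G.Adj q p)
    (hq' : G.Adj q' p) (h : G.dist x q + 1 = G.dist x p) (h' : G.dist x q' + 1 = G.dist x p) :
    q = q' := by
  classical
  have isPath_concat : ∀ {r : V} (hr : G.Adj r p), G.dist x r + 1 = G.dist x p →
      ∃ P : G.Walk x r, (P.concat hr).IsPath := by
    intro r hr hd
    obtain ⟨P, hP, hlen⟩ := hG.connected.exists_path_of_dist x r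
    refine ⟨P, hP.concat (fun hp => ?_) hr⟩
    have := G.dist_le (P.takeUntil p hp)
    have := P.length_takeUntil_le_length hp
    omega
  obtain ⟨P, hP⟩ := isPath_concat hq h
  obtain ⟨P', hP'⟩ := isPath_concat hq' h'
  have := (hG.isAcyclic.subsingleton_path x p).elim ⟨_, hP⟩ ⟨_, hP'⟩
  simpa using congrArg (fun Q : G.Path x p => Q.1.penultimate) this

theorem IsTree.dist_eq_add_one_of_adj_of_ne (hG : G.IsTree) {x p q q' : V} (hq : G.Adj q p)
    (hq' : G.Adj q' p) (hne : q ≠ q') (h : G.dist x q + 1 = G.dist x p) :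
    G.dist x q' = G.dist x p + 1 := by
  rcases hG.dist_eq_dist_add_one_of_adj x hq'.symm with h' | h'
  · exact absurd (hG.eq_of_adj_of_dist_add_one_eq hq hq' h h'.symm) hne
  · exact h'

section Action

variable {Γ : Type*} [Group Γ] [MulAction Γ V]

theorem dist_smul (hG : G.Connected)
    (hact : ∀ (g : Γ) (u u' : V), G.Adj u u' → G.Adj (g • u) (g • u')) (g : Γ) (x y : V) :
    G.dist (g • x) (g • y) = G.dist x y := by
  have dist_smul_le : ∀ (h : Γ) (x y : V), G.dist (h • x) (h • y) ≤ G.dist x y := by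
    intro h x y
    obtain ⟨P, hP⟩ := hG.exists_walk_length_eq_dist x y
    let f : G →g G := ⟨(h • ·), hact h _ _⟩
    have := G.dist_le (P.map f)
    rwa [Walk.length_map, hP] at this
  refine le_antisymm (dist_smul_le g x y) ?_
  simpa using dist_smul_le g⁻¹ (g • x) (g • y)

theorem IsTree.dist_smul_of_smul_eq (hG : G.IsTree)
    (hact : ∀ (g : Γ) (u u' : V), G.Adj u u' → G.Adj (g • u) (g • u')) {h : Γ} {p q x : V}
    (hpq : G.Adj q p) (hp : h • p = p) (hq : h • q ≠ q) (hx : G.dist x q + 1 = G.dist x p) :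
    G.dist (h • x) p + 1 = G.dist (h • x) q ∧ G.dist (h • x) p = G.dist x q + 1 := by
  have hdist := dist_smul hG.connected hact
  have hxp : G.dist (h • x) p = G.dist x p := by
    conv_lhs => rw [← hp]
    exact hdist h x p
  have hxq : G.dist (h • x) q = G.dist x (h⁻¹ • q) := by
    rw [← hdist h⁻¹, inv_smul_smul]
  have hadj : G.Adj (h⁻¹ • q) p := by
    simpa [inv_smul_eq_iff.mpr hp.symm] using hact h⁻¹ q p hpq
  have hne : q ≠ h⁻¹ • q := fun heq => hq (inv_smul_eq_iff.mp heq.symm).symm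
  have := hG.dist_eq_add_one_of_adj_of_ne hpq hadj hne hx
  omega

end Action

end SimpleGraph

namespace Monoid.Coprod

section Monoid

variable {A B : Type*} [Monoid A] [Monoid B]

def letter : A ⊕ B → A ∗ B := Sum.elim inl inr

def wordProd (L : List (A ⊕ B)) : A ∗ B := (L.map letter).prod

@[simp] theorem wordProd_nil : wordProd ([] : List (A ⊕ B)) = 1 := rfl

@[simp] theorem wordProd_cons (ℓ : A ⊕ B) (L : List (A ⊕ B)) :
    wordProd (ℓ :: L) = letter ℓ * wordProd L := List.prod_cons

@[simp] theorem wordProd_append (L M : List (A ⊕ B)) :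
    wordProd (L ++ M) = wordProd L * wordProd M := by
  simp [wordProd]

theorem exists_wordProd_eq (g : A ∗ B) : ∃ L, wordProd L = g := by
  induction g using Coprod.induction_on' with
  | one => exact ⟨[], rfl⟩
  | inl_mul a _ ih =>
    obtain ⟨L, rfl⟩ := ih
    exact ⟨.inl a :: L, rfl⟩
  | inr_mul b _ ih =>
    obtain ⟨L, rfl⟩ := ih
    exact ⟨.inr b :: L, rfl⟩

theorem exists_letter_eq_mul {ℓ ℓ' : A ⊕ B} (h : ℓ.isLeft = ℓ'.isLeft) :
    ∃ m, letter m = letter ℓ * letter ℓ' := by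
  rcases ℓ with a | b <;> rcases ℓ' with a' | b'
  · exact ⟨.inl (a * a'), by simp [letter]⟩
  · simp at h
  · simp at h
  · exact ⟨.inr (b * b'), by simp [letter]⟩

def IsMinimalWord (L : List (A ⊕ B)) : Prop :=
  ∀ L', wordProd L' = wordProd L → L.length ≤ L'.length

theorem exists_isMinimalWord (L : List (A ⊕ B)) :
    ∃ L', wordProd L' = wordProd L ∧ L'.length ≤ L.length ∧ IsMinimalWord L' := by
  obtain ⟨L', hL', hmin⟩ :=
    (measure List.length).wf.has_min {L' | wordProd L' = wordProd L} ⟨L, rfl⟩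
  exact ⟨L', hL', not_lt.mp (hmin L rfl), fun M hM => not_lt.mp (hmin M (hM.trans hL'))⟩

namespace IsMinimalWord

variable {ℓ ℓ' : A ⊕ B} {L : List (A ⊕ B)}

theorem of_cons (h : IsMinimalWord (ℓ :: L)) : IsMinimalWord L := fun M hM => by
  simpa using h (ℓ :: M) (by simp [hM])

theorem letter_ne_one (h : IsMinimalWord (ℓ :: L)) : letter ℓ ≠ 1 := fun h1 => by
  simpa using h L (by simp [h1])

theorem isLeft_ne (h : IsMinimalWord (ℓ :: ℓ' :: L)) : ℓ.isLeft ≠ ℓ'.isLeft := fun hside => by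
  obtain ⟨m, hm⟩ := exists_letter_eq_mul hside
  simpa using h (m :: L) (by simp [hm, mul_assoc])

end IsMinimalWord

end Monoid

variable {A B : Type*} [Group A] [Group B]

def invLetter : A ⊕ B → A ⊕ B := Sum.map (·⁻¹) (·⁻¹)

@[simp] theorem letter_invLetter (ℓ : A ⊕ B) : letter (invLetter ℓ) = (letter ℓ)⁻¹ := by
  cases ℓ <;> simp [letter, invLetter]

@[simp] theorem isLeft_invLetter (ℓ : A ⊕ B) : (invLetter ℓ).isLeft = ℓ.isLeft :=
  Sum.isLeft_map _ _ ℓ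

@[simp] theorem wordProd_reverse_map_invLetter (L : List (A ⊕ B)) :
    wordProd (L.map invLetter).reverse = (wordProd L)⁻¹ := by
  induction L with
  | nil => simp
  | cons ℓ L ih => simp [ih]

theorem IsMinimalWord.reverse_map_invLetter {L : List (A ⊕ B)} (h : IsMinimalWord L) :
    IsMinimalWord (L.map invLetter).reverse := fun M hM => by
  simpa using h (M.map invLetter).reverse (by simpa [inv_eq_iff_eq_inv] using hM)

section TreeAction

/- `ends true` is the vertex fixed by `A` and `ends false` the one fixed by `B`, matching
`Sum.isLeft` on letters. A vertex `x` with `X.dist x (ends s) + 1 = X.dist x (ends !s)` lies in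
the half-tree on the `ends s` side of the edge. -/
variable {V : Type*} {X : SimpleGraph V} [MulAction (A ∗ B) V] (hX : X.IsTree)
  (hact : ∀ (g : A ∗ B) (u u' : V), X.Adj u u' → X.Adj (g • u) (g • u'))
  {ends : Bool → V} (hends : X.Adj (ends true) (ends false))
  (hfix : ∀ ℓ : A ⊕ B, letter ℓ • ends ℓ.isLeft = ends ℓ.isLeft)
  (hmove : ∀ ℓ : A ⊕ B, letter ℓ ≠ 1 → letter ℓ • ends (!ℓ.isLeft) ≠ ends (!ℓ.isLeft))

include hX hends in
theorem exists_closer_end (x : V) : ∃ s, X.dist x (ends s) + 1 = X.dist x (ends !s) := by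
  rcases hX.dist_eq_dist_add_one_of_adj x hends with h | h
  · exact ⟨false, h.symm⟩
  · exact ⟨true, h.symm⟩

include hX hact hends hfix hmove

theorem dist_letter_smul {ℓ : A ⊕ B} (hℓ : letter ℓ ≠ 1) {x : V}
    (hx : X.dist x (ends !ℓ.isLeft) + 1 = X.dist x (ends ℓ.isLeft)) :
    X.dist (letter ℓ • x) (ends ℓ.isLeft) + 1 = X.dist (letter ℓ • x) (ends !ℓ.isLeft) ∧
      X.dist (letter ℓ • x) (ends ℓ.isLeft) = X.dist x (ends !ℓ.isLeft) + 1 := by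
  have hadj : X.Adj (ends !ℓ.isLeft) (ends ℓ.isLeft) := by
    cases ℓ.isLeft
    exacts [hends, hends.symm]
  exact hX.dist_smul_of_smul_eq hact hadj (hfix ℓ) (hmove ℓ hℓ) hx

theorem dist_wordProd_cons_smul {s : Bool} {x : V}
    (hx : X.dist x (ends s) + 1 = X.dist x (ends !s)) (ℓ : A ⊕ B) (M : List (A ⊕ B))
    (hL : IsMinimalWord (ℓ :: M)) (hlast : ∀ z ∈ (ℓ :: M).getLast?, z.isLeft = !s) :
    X.dist (wordProd (ℓ :: M) • x) (ends ℓ.isLeft) + 1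
        = X.dist (wordProd (ℓ :: M) • x) (ends !ℓ.isLeft) ∧
      X.dist (wordProd (ℓ :: M) • x) (ends ℓ.isLeft) = X.dist x (ends s) + (ℓ :: M).length := by
  induction M generalizing ℓ with
  | nil =>
    obtain rfl : s = !ℓ.isLeft := by rw [hlast ℓ rfl, Bool.not_not]
    simpa using dist_letter_smul hX hact hends hfix hmove hL.letter_ne_one (by simpa using hx)
  | cons m M ih =>
    obtain ⟨hnear, hdist⟩ := ih m hL.of_cons (by simpa using hlast)
    have hm : m.isLeft = !ℓ.isLeft := Bool.eq_not_iff.mpr hL.isLeft_ne.symm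
    rw [hm, Bool.not_not] at hnear
    rw [hm] at hdist
    have := dist_letter_smul hX hact hends hfix hmove hL.letter_ne_one hnear
    rw [wordProd_cons ℓ, mul_smul, List.length_cons]
    omega

theorem wordProd_smul_ne_self_of_closer {L : List (A ⊕ B)} (hL : IsMinimalWord L) (hne : L ≠ [])
    {s : Bool} {x : V} (hx : X.dist x (ends s) + 1 = X.dist x (ends !s))
    (hlast : ∀ z ∈ L.getLast?, z.isLeft = !s) : wordProd L • x ≠ x := by
  obtain ⟨ℓ, M, rfl⟩ := List.exists_cons_of_ne_nil hne
  intro hfixed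
  obtain ⟨hnear, hdist⟩ := dist_wordProd_cons_smul hX hact hends hfix hmove hx ℓ M hL hlast
  rw [hfixed] at hnear hdist
  rw [List.length_cons] at hdist
  generalize ℓ.isLeft = b at hnear hdist
  cases b <;> cases s <;> simp only [Bool.not_true, Bool.not_false] at hx hnear hdist <;> omega

theorem wordProd_smul_ne_self {ℓ z : A ⊕ B} {M : List (A ⊕ B)}
    (hL : IsMinimalWord (ℓ :: (M ++ [z]))) (hside : z.isLeft ≠ ℓ.isLeft) (x : V) :
    wordProd (ℓ :: (M ++ [z])) • x ≠ x := by
  obtain ⟨s, hs⟩ := exists_closer_end hX hends x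
  by_cases hz : z.isLeft = !s
  · refine wordProd_smul_ne_self_of_closer hX hact hends hfix hmove hL (by simp) hs ?_
    rw [← List.cons_append, List.getLast?_concat]
    simpa using hz
  · have hℓ : ℓ.isLeft = !s := by
      revert hz hside
      cases z.isLeft <;> cases ℓ.isLeft <;> cases s <;> decide
    have hinv := wordProd_smul_ne_self_of_closer hX hact hends hfix hmove
      hL.reverse_map_invLetter (by simp) hs (by rw [List.getLast?_reverse]; simpa using hℓ)
    rw [wordProd_reverse_map_invLetter] at hinv
    exact fun h => hinv (inv_smul_eq_iff.mpr h.symm)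

theorem exists_conj_letter_of_smul_eq_self (L : List (A ⊕ B)) (hL : IsMinimalWord L) (x : V)
    (hx : wordProd L • x = x) : ∃ k ℓ, wordProd L = k * letter ℓ * k⁻¹ := by
  induction hn : L.length using Nat.strong_induction_on generalizing L x with
  | _ n ih =>
    rcases L with _ | ⟨ℓ, L⟩
    · exact ⟨1, .inl 1, by simp [letter]⟩
    rcases L.eq_nil_or_concat' with rfl | ⟨M, z, rfl⟩
    · exact ⟨1, ℓ, by simp⟩
    by_cases hside : z.isLeft = ℓ.isLeft
    · obtain ⟨z', hz'⟩ := exists_letter_eq_mul hside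
      have hconj :
          wordProd (M ++ [z']) = (letter ℓ)⁻¹ * wordProd (ℓ :: (M ++ [z])) * letter ℓ := by
        simp [hz', mul_assoc]
      obtain ⟨L', hL', hlen, hmin⟩ := exists_isMinimalWord (M ++ [z'])
      obtain ⟨k, m, hk⟩ := ih L'.length
        (by simp only [List.length_append, List.length_cons, List.length_nil] at hlen hn; omega)
        L' hmin ((letter ℓ)⁻¹ • x) (by rw [hL', hconj, mul_smul, smul_inv_smul, mul_smul, hx]) rfl
      rw [hL', hconj] at hk
      refine ⟨letter ℓ * k, m, ?_⟩
      calc wordProd (ℓ :: (M ++ [z]))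
          = letter ℓ * ((letter ℓ)⁻¹ * wordProd (ℓ :: (M ++ [z])) * letter ℓ) * (letter ℓ)⁻¹ := by
            group
        _ = letter ℓ * k * letter m * (letter ℓ * k)⁻¹ := by rw [hk]; group
    · exact absurd hx (wordProd_smul_ne_self hX hact hends hfix hmove hL hside x)

end TreeAction

end Monoid.Coprod

open Monoid Coprod

/-- Suppose the free product `A ∗ B` acts by automorphisms on a tree `X`, and `v`, `w` are
adjacent vertices such that `A` fixes `v`, `B` fixes `w`, no nontrivial element of `A`
fixes `w`, and no nontrivial element of `B` fixes `v`. Then every element of `A ∗ B` that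
is not conjugate to an element of (the image of) `A` or of `B` fixes no vertex of `X`,
i.e. acts hyperbolically. -/
theorem stmt_13 {A B V : Type*} [Group A] [Group B]
    (X : SimpleGraph V) (htree : X.IsTree)
    [MulAction (Coprod A B) V]
    (hact : ∀ (g : Coprod A B) (u u' : V), X.Adj u u' → X.Adj (g • u) (g • u'))
    (v w : V) (hvw : X.Adj v w)
    (hAv : ∀ a : A, (Coprod.inl a : Coprod A B) • v = v)
    (hBw : ∀ b : B, (Coprod.inr b : Coprod A B) • w = w)
    (hAw : ∀ a : A, a ≠ 1 → (Coprod.inl a : Coprod A B) • w ≠ w)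
    (hBv : ∀ b : B, b ≠ 1 → (Coprod.inr b : Coprod A B) • v ≠ v)
    (g : Coprod A B)
    (hgA : ∀ (k : Coprod A B) (a : A), g ≠ k * Coprod.inl a * k⁻¹)
    (hgB : ∀ (k : Coprod A B) (b : B), g ≠ k * Coprod.inr b * k⁻¹) :
    ∀ u : V, g • u ≠ u := by
  intro u hu
  obtain ⟨L₀, rfl⟩ := exists_wordProd_eq g
  obtain ⟨L, hL, -, hmin⟩ := exists_isMinimalWord L₀
  have hfix : ∀ ℓ : A ⊕ B, letter ℓ • cond ℓ.isLeft v w = cond ℓ.isLeft v w := by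
    rintro (a | b)
    exacts [hAv a, hBw b]
  have hmove : ∀ ℓ : A ⊕ B, letter ℓ ≠ 1 →
      letter ℓ • cond (!ℓ.isLeft) v w ≠ cond (!ℓ.isLeft) v w := by
    rintro (a | b) hℓ
    · exact hAw a (by rintro rfl; exact hℓ (map_one _))
    · exact hBv b (by rintro rfl; exact hℓ (map_one _))
  obtain ⟨k, a | b, hk⟩ := exists_conj_letter_of_smul_eq_self htree hact
    (ends := (cond · v w)) hvw hfix hmove L hmin u (by rw [hL]; exact hu)
  · exact hgA k a (hL ▸ hk)
  · exact hgB k b (hL ▸ hk)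
end

section
/- Let G = A ∗_C B be an amalgamated free product, formed from injective group homomorphisms i : C → A and j : C → B. If an element of the image of A in G is conjugate in G to an element of the image of B in G, then it is conjugate in G to an element of the image of C in G. -/
/-! Realise the amalgam as `PushoutI` over the index type `Bool`; the universal property gives
homomorphisms in both directions, so it suffices to work there. Write the conjugator as `x * V`
with `x ∈ A` and `V` a reduced word whose first letter is not in `A`, and absorb `x` into `a`,
so that `a = V b V⁻¹`. If `V` is empty, `a` lies in `A ∩ B = C`. Otherwise, unless `a` or `b`
already lies in `C`, the word `V⁻¹ a V` is reduced of length `2|V| + 1 ≥ 3` and represents `b`,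
which is also represented by the reduced word `b` of length one; by the normal form theorem,
reduced words representing the same element have the same length. -/

theorem Subgroup.IsComplement.eq_one_of_mem_of_mem {G : Type*} [Group G] {S T : Set G}
    (hST : Subgroup.IsComplement S T) (hS1 : 1 ∈ S) (hT1 : 1 ∈ T) {g : G} (hgS : g ∈ S)
    (hgT : g ∈ T) : g = 1 := by
  have h := hST.equiv_snd_eq_self_of_mem_of_one_mem hS1 hgT
  rw [hST.equiv_snd_eq_one_of_mem_of_one_mem hT1 hgS] at h
  exact congrArg Subtype.val h.symm

namespace Monoid.CoprodI.NeWord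

variable {ι : Type*} {G : ι → Type*} [∀ i, Group (G i)]

theorem toList_inv {i j : ι} (w : NeWord G i j) :
    w.inv.toList = (w.toList.map fun p => ⟨p.1, p.2⁻¹⟩).reverse := by
  induction w <;> simp [inv, *]

end Monoid.CoprodI.NeWord

namespace Monoid.PushoutI

open CoprodI

variable {ι : Type*} {G : ι → Type*} [∀ i, Group (G i)] {H : Type*} [Group H]
  {φ : ∀ i, H →* G i}

theorem NormalWord.reduced {d : NormalWord.Transversal φ} (w : NormalWord d) :
    Reduced φ w.toWord := fun ⟨i, g⟩ hg hgφ =>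
  w.ne_one _ hg <| (d.compl i).eq_one_of_mem_of_mem (one_mem _) (d.one_mem i) hgφ
    (w.normalized i g hg)

theorem Reduced.map_fst_eq_of_prod_eq (hφ : ∀ i, Function.Injective (φ i)) {w₁ w₂ : Word G}
    (hw₁ : Reduced φ w₁) (hw₂ : Reduced φ w₂)
    (h : ofCoprodI (φ := φ) w₁.prod = ofCoprodI w₂.prod) :
    w₁.toList.map Sigma.fst = w₂.toList.map Sigma.fst := by
  obtain ⟨d⟩ := NormalWord.transversal_nonempty φ hφ
  obtain ⟨w₁', hprod₁, hfst₁⟩ := hw₁.exists_normalWord_prod_eq d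
  obtain ⟨w₂', hprod₂, hfst₂⟩ := hw₂.exists_normalWord_prod_eq d
  rw [← hfst₁, ← hfst₂, NormalWord.prod_injective (hprod₁.trans (h.trans hprod₂.symm))]

theorem reduced_toWord_singleton {i : ι} {x : G i} (hx : x ≠ 1) :
    Reduced φ (NeWord.singleton x hx).toWord ↔ x ∉ (φ i).range := by
  simp [Reduced, NeWord.toWord]

theorem reduced_toWord_append {i j k l : ι} {w₁ : NeWord G i j} {hjk : j ≠ k}
    {w₂ : NeWord G k l} :
    Reduced φ (w₁.append hjk w₂).toWord ↔ Reduced φ w₁.toWord ∧ Reduced φ w₂.toWord := by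
  simp only [Reduced, NeWord.toWord, NeWord.toList, List.forall_mem_append]

theorem reduced_toWord_inv {i j : ι} {w : NeWord G i j} :
    Reduced φ w.inv.toWord ↔ Reduced φ w.toWord := by
  simp only [Reduced, NeWord.toWord, NeWord.toList_inv, List.mem_reverse, List.forall_mem_map,
    inv_mem_iff]

theorem exists_eq_of_mul_ofCoprodI (hφ : ∀ i, Function.Injective (φ i)) (i : ι)
    (k : PushoutI φ) : ∃ (x : G i) (w : Word G),
      Reduced φ w ∧ w.fstIdx ≠ some i ∧ k = of i x * ofCoprodI w.prod := by
  classical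
  obtain ⟨d⟩ := NormalWord.transversal_nonempty φ hφ
  set w : NormalWord d := NormalWord.equiv k
  set p := Word.equivPair i w.toWord
  refine ⟨φ i w.head * p.head, p.tail, fun g hg => w.reduced g ?_, p.fstIdx_ne, ?_⟩
  · exact Word.mem_of_mem_equivPair_tail _ hg
  · have hk : k = w.prod := (NormalWord.equiv.symm_apply_apply k).symm
    have hw : w.toWord = Word.rcons p := ((Word.equivPair i).symm_apply_apply _).symm
    rw [hk, NormalWord.prod, hw, Word.prod_rcons]
    simp [of_apply_eq_base, mul_assoc]

theorem Reduced.of_ne_conj_of_notMem_range (hφ : ∀ i, Function.Injective (φ i)) {i j : ι}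
    {V : Word G} (hV : Reduced φ V) (hVe : V ≠ .empty) (hfst : V.fstIdx ≠ some i) {a : G i}
    {b : G j} (ha : a ∉ (φ i).range) (hb : b ∉ (φ j).range) :
    of (φ := φ) i a ≠ ofCoprodI V.prod * of j b * (ofCoprodI V.prod)⁻¹ := by
  intro hconj
  obtain ⟨k, m, w, rfl⟩ := NeWord.of_word V hVe
  have hki : k ≠ i := fun hki => hfst (by simp [Word.fstIdx, NeWord.toWord, hki])
  have ha1 : a ≠ 1 := fun h => ha (h ▸ one_mem _)
  have hb1 : b ≠ 1 := fun h => hb (h ▸ one_mem _)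
  let u := w.inv.append hki ((NeWord.singleton a ha1).append hki.symm w)
  have hu : Reduced φ u.toWord := by
    simp only [u, reduced_toWord_append, reduced_toWord_inv, reduced_toWord_singleton]
    exact ⟨hV, ha, hV⟩
  have hprod : ofCoprodI (φ := φ) u.toWord.prod =
      ofCoprodI (NeWord.singleton b hb1).toWord.prod := by
    change ofCoprodI (φ := φ) u.prod = ofCoprodI (NeWord.singleton b hb1).prod
    simp only [u, NeWord.append_prod, NeWord.inv_prod, NeWord.prod_singleton, map_mul, map_inv,
      ofCoprodI_of, hconj]
    simp [NeWord.prod]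
  have hlen := congrArg List.length
    (hu.map_fst_eq_of_prod_eq hφ ((reduced_toWord_singleton hb1).2 hb) hprod)
  simp only [u, NeWord.toWord, NeWord.toList, NeWord.toList_inv, List.length_append,
    List.length_reverse, List.length_map, List.length_cons, List.length_nil] at hlen
  exact w.toList_ne_nil (List.eq_nil_of_length_eq_zero (by omega))

theorem exists_isConj_base_of_isConj (hφ : ∀ i, Function.Injective (φ i)) {i j : ι}
    (hij : i ≠ j) {a : G i} {b : G j} (h : IsConj (of (φ := φ) i a) (of j b)) :
    ∃ c : H, IsConj (of (φ := φ) i a) (base φ c) := by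
  obtain ⟨k, hk⟩ := isConj_iff.1 h.symm
  obtain ⟨x, V, hV, hfst, rfl⟩ := exists_eq_of_mul_ofCoprodI hφ i k
  have ha' : IsConj a (x⁻¹ * a * x) := isConj_iff.2 ⟨x⁻¹, by group⟩
  set a' := x⁻¹ * a * x
  have hconj : of (φ := φ) i a' = ofCoprodI V.prod * of j b * (ofCoprodI V.prod)⁻¹ := by
    simp only [a', map_mul, map_inv, ← hk]
    group
  suffices ∃ c, IsConj (of (φ := φ) i a') (base φ c) from
    this.imp fun _ => ((of i).map_isConj ha').trans
  by_cases ha : a' ∈ (φ i).range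
  · obtain ⟨c, hc⟩ := ha
    exact ⟨c, by rw [← hc, of_apply_eq_base]⟩
  by_cases hb : b ∈ (φ j).range
  · obtain ⟨c, rfl⟩ := hb
    exact ⟨c, isConj_iff.2 ⟨(ofCoprodI V.prod)⁻¹, by rw [hconj, of_apply_eq_base]; group⟩⟩
  by_cases hVe : V = .empty
  · subst hVe
    have hmem : of (φ := φ) i a' ∈ (of i).range ⊓ (of j).range :=
      ⟨⟨a', rfl⟩, ⟨b, by simp [hconj]⟩⟩
    rw [inf_of_range_eq_base_range hφ hij] at hmem
    obtain ⟨c, hc⟩ := hmem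
    exact ⟨c, by rw [hc]⟩
  exact absurd hconj (hV.of_ne_conj_of_notMem_range hφ hVe hfst ha hb)

end Monoid.PushoutI

section PairDiagram

universe u v

variable {A B : Type u} {C : Type v} [Group A] [Group B] [Group C]

def pairFamily (A B : Type u) : Bool → Type u := fun b => bif b then A else B

instance pairFamily.instGroup : ∀ b, Group (pairFamily A B b)
  | true => ‹Group A›
  | false => ‹Group B›

def pairDiagram (i : C →* A) (j : C →* B) : ∀ b, C →* pairFamily A B b
  | true => i
  | false => j

def pairCocone {K : Type*} [Monoid K] (f : A →* K) (g : B →* K) :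
    ∀ b, pairFamily A B b →* K
  | true => f
  | false => g

end PairDiagram

open Monoid PushoutI in
/-- Let `G = A ∗_C B` be the amalgamated free product of injective homomorphisms
`i : C → A` and `j : C → B`; this is expressed by saying that `G`, together with
homomorphisms `iA : A → G` and `iB : B → G` satisfying `iA ∘ i = iB ∘ j`, is the pushout
of `i` and `j` in the category of groups.  If an element of the image of `A` in `G` is
conjugate in `G` to an element of the image of `B`, then it is conjugate in `G` to an
element of the image of `C`. -/
theorem stmt_14 {A B C G : Type} [Group A] [Group B] [Group C] [Group G]
    (i : C →* A) (j : C →* B) (hi : Function.Injective i) (hj : Function.Injective j)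
    (iA : A →* G) (iB : B →* G) (hcomm : iA.comp i = iB.comp j)
    (huniv : ∀ (H : Type) [Group H] (f : A →* H) (g : B →* H),
      f.comp i = g.comp j → ∃! h : G →* H, h.comp iA = f ∧ h.comp iB = g)
    (a : A) (b : B) (k : G) (hconj : iA a = k * iB b * k⁻¹) :
    ∃ (k' : G) (c : C), iA a = k' * iA (i c) * k'⁻¹ := by
  set φ := pairDiagram i j
  have hφ : ∀ b, Function.Injective (φ b) := Bool.forall_bool.2 ⟨hj, hi⟩
  have hcomp : (of (φ := φ) true : A →* _).comp i = (of (φ := φ) false : B →* _).comp j :=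
    (of_comp_eq_base true).trans (of_comp_eq_base false).symm
  obtain ⟨θ, ⟨hθA, hθB⟩, -⟩ := huniv _ _ _ hcomp
  let ℓ := lift (φ := φ) (pairCocone iA iB) (iA.comp i) (Bool.forall_bool.2 ⟨hcomm.symm, rfl⟩)
  have hconjG : IsConj (iA a) (iB b) := (isConj_iff.2 ⟨k, hconj.symm⟩).symm
  have hθa : θ (iA a) = of true a := DFunLike.congr_fun hθA a
  have hθb : θ (iB b) = of false b := DFunLike.congr_fun hθB b
  have hconjP := θ.map_isConj hconjG
  rw [hθa, hθb] at hconjP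
  obtain ⟨c, hc⟩ := exists_isConj_base_of_isConj hφ (by decide) hconjP
  have hℓa : ℓ (of true a) = iA a := lift_of (φ := φ) _ _ _ (i := true) a
  have hℓc : ℓ (base φ c) = iA (i c) := lift_base (φ := φ) _ _ _ c
  have hconjC := ℓ.map_isConj hc
  rw [hℓa, hℓc] at hconjC
  obtain ⟨k', hk'⟩ := isConj_iff.1 hconjC.symm
  exact ⟨k', c, hk'.symm⟩
end

section
/- Let X be a path-connected aspherical space with fundamental group G = π₁(X, x₀), and let A, B ≤ G be subgroups such that gAg⁻¹ ∩ B = {1} for every g ∈ G. Let Y_A and Y_B be path-connected aspherical CW complexes with base-point-preserving continuous maps f : Y_A → X and h : Y_B → X inducing injections on fundamental groups with images A and B respectively. Let E = {(p, q, γ) ∈ Y_A × Y_B × C([0,1], X) : γ(0) = f(p), γ(1) = h(q)} with projection π : E → Y_A × Y_B, π(p,q,γ) = (p,q). If U ⊆ Y_A × Y_B is an open set admitting a continuous section s : U → E of π (i.e. π ∘ s is the inclusion of U), then for every continuous map φ₀ : S¹ → U, the composite S¹ → U ↪ Y_A × Y_B is null-homotopic. -/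
/-! The section `s` is a family of paths in `X` from `f p` to `h q`, depending continuously on
`(p, q) ∈ U`, i.e. a homotopy between `f ∘ pr₁` and `h ∘ pr₂` on `U`. Hence for a loop `ω` in `U`
the loops `f ∘ pr₁ ∘ ω` and `h ∘ pr₂ ∘ ω` are freely homotopic, so their classes in `π₁(X, x₀)`
are conjugate. They lie in `A` and `B`, whose conjugates meet trivially, so both are trivial;
as `f` and `h` are injective on `π₁`, the two projections of `ω` are null-homotopic loops, and a
map from the circle whose loop is null-homotopic is null-homotopic. -/

open CategoryTheory
open scoped unitInterval FundamentalGroupoid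

/-- `X` is (homeomorphic to the geometric realization of) a CW complex. -/
def IsCWComplex (X : Type) [TopologicalSpace X] : Prop :=
  ∃ C : TopCat.{0}, Nonempty (TopCat.CWComplex C) ∧ Nonempty (C ≃ₜ X)

/-- A space is aspherical if all homotopy groups `π_n` for `n ≥ 2` are trivial. -/
def Aspherical (X : Type*) [TopologicalSpace X] : Prop :=
  ∀ n : ℕ, 2 ≤ n → ∀ x : X, Subsingleton (HomotopyGroup (Fin n) X x)

/-- The homomorphism `π₁(Y, y) → π₁(X, x)` induced by a continuous map `f : Y → X` with
`f y = x`. -/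
noncomputable def π₁Map {Y X : Type} [TopologicalSpace Y] [TopologicalSpace X]
    (f : C(Y, X)) (y : Y) (x : X) (hf : f y = x) :
    FundamentalGroup Y y →* FundamentalGroup X x :=
  let F : FundamentalGroupoid Y ⥤ FundamentalGroupoid X :=
    πₘ (show TopCat.of Y ⟶ TopCat.of X from TopCat.ofHom f)
  (((eqToIso (show F.obj ⟨y⟩ = (⟨x⟩ : FundamentalGroupoid X) by
      subst hf; rfl)).conj).toMonoidHom).comp (F.mapEnd ⟨y⟩)

open Topology

theorem Subgroup.eq_one_of_isConj_of_map_conj_inf_eq_bot {G : Type*} [Group G]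
    {A B : Subgroup G} (hAB : ∀ g : G, A.map (MulAut.conj g).toMonoidHom ⊓ B = ⊥) {a b : G}
    (ha : a ∈ A) (hb : b ∈ B) (hab : IsConj a b) : a = 1 ∧ b = 1 := by
  obtain ⟨g, rfl⟩ := isConj_iff.1 hab
  have hmem : g * a * g⁻¹ ∈ A.map (MulAut.conj g).toMonoidHom ⊓ B := ⟨⟨a, ha, rfl⟩, hb⟩
  rw [hAB g, Subgroup.mem_bot, conj_eq_one_iff] at hmem
  exact ⟨hmem, by rw [hmem, conj_eq_one_iff]⟩

namespace CategoryTheory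

theorem Groupoid.isConj_conj_self {G : Type*} [Groupoid G] {d : G} (k : d ≅ d) (y : End d) :
    IsConj y (k.conj y) :=
  isConj_iff.2 ⟨k.hom, by
    change Groupoid.inv k.hom ≫ y ≫ k.hom = _
    rw [Groupoid.inv_eq_inv, IsIso.Iso.inv_hom, Iso.conj_apply]⟩

theorem Groupoid.isConj_conj {G : Type*} [Groupoid G] {c d : G} (e₁ e₂ : c ≅ d) (x : End c) :
    IsConj (e₁.conj x) (e₂.conj x) := by
  simpa only [Iso.trans_conj, Iso.symm_self_conj] using
    isConj_conj_self (e₁.symm ≪≫ e₂) (e₁.conj x)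

theorem NatTrans.conj_map {C D : Type*} [Category C] [Category D] {F G : C ⥤ D} (η : F ⟶ G)
    {c : C} (e : F.obj c ≅ G.obj c) (he : e.hom = η.app c) (x : End c) :
    e.conj (F.map x) = G.map x := by
  rw [Iso.conj_apply, Iso.inv_comp_eq, he, η.naturality]

end CategoryTheory

namespace Circle

noncomputable def stdLoop : Path (1 : Circle) 1 where
  toFun t := exp (2 * Real.pi * t)
  source' := by simp
  target' := by simp

theorem stdLoop_apply (t : I) : stdLoop t = exp (2 * Real.pi * t) := rfl

theorem stdLoop_surjective : Function.Surjective stdLoop := by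
  intro c
  obtain ⟨θ, rfl⟩ := exp_surjective c
  obtain ⟨θ', ⟨h0, h1⟩, hθ⟩ := periodic_exp.exists_mem_Ico₀ Real.two_pi_pos θ
  have hπ := Real.two_pi_pos
  refine ⟨⟨θ' / (2 * Real.pi), by positivity, (div_le_one hπ).2 h1.le⟩, ?_⟩
  rw [stdLoop_apply, hθ, mul_div_cancel₀ _ hπ.ne']

theorem eq_or_endpoints_of_stdLoop_eq {s t : I} (h : stdLoop s = stdLoop t) :
    s = t ∨ (s = 0 ∧ t = 1) ∨ (s = 1 ∧ t = 0) := by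
  obtain ⟨m, hm⟩ := exp_eq_exp.1 h
  have hst : (s : ℝ) = t + m := by
    apply mul_left_cancel₀ Real.two_pi_pos.ne'
    linarith
  obtain ⟨⟨hs0, hs1⟩, ⟨ht0, ht1⟩⟩ := And.intro s.2 t.2
  have hm' : m = -1 ∨ m = 0 ∨ m = 1 := by
    have : -1 ≤ m := by exact_mod_cast (by linarith : (-1 : ℝ) ≤ m)
    have : m ≤ 1 := by exact_mod_cast (by linarith : (m : ℝ) ≤ 1)
    omega
  simp only [Subtype.ext_iff, Set.Icc.coe_zero, Set.Icc.coe_one]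
  rcases hm' with rfl | rfl | rfl <;> push_cast at hst
  · exact Or.inr (Or.inl ⟨by linarith, by linarith⟩)
  · exact Or.inl (by linarith)
  · exact Or.inr (Or.inr ⟨by linarith, by linarith⟩)

theorem isQuotientMap_prodMap_stdLoop :
    IsQuotientMap ((ContinuousMap.id I).prodMap stdLoop.toContinuousMap) :=
  IsClosedMap.isQuotientMap (Continuous.isClosedMap (by fun_prop)) (by fun_prop)
    (Function.surjective_id.prodMap stdLoop_surjective)

end Circle

namespace ContinuousMap

variable {Z X : Type*} [TopologicalSpace Z] [TopologicalSpace X]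

theorem homotopic_const_of_map_stdLoop_homotopic_refl (ψ : C(Circle, Z))
    (hψ : (Circle.stdLoop.map ψ.continuous).Homotopic (Path.refl _)) :
    ψ.Homotopic (const Circle (ψ 1)) := by
  obtain ⟨F⟩ := hψ
  have hq := Circle.isQuotientMap_prodMap_stdLoop
  have hF :
      Function.FactorsThrough F ((ContinuousMap.id I).prodMap Circle.stdLoop.toContinuousMap) := by
    rintro ⟨r, s⟩ ⟨r', t⟩ hst
    obtain ⟨rfl, hst⟩ := Prod.ext_iff.1 hst
    rcases Circle.eq_or_endpoints_of_stdLoop_eq hst with rfl | ⟨rfl, rfl⟩ | ⟨rfl, rfl⟩ <;> simp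
  have hG (r t : I) : hq.lift F.toContinuousMap hF (r, Circle.stdLoop t) = F (r, t) :=
    DFunLike.congr_fun (hq.lift_comp F.toContinuousMap hF) (r, t)
  refine ⟨⟨hq.lift F.toContinuousMap hF, fun c => ?_, fun c => ?_⟩⟩ <;>
  · obtain ⟨t, rfl⟩ := Circle.stdLoop_surjective c
    simp [hG]

def Homotopy.ofPaths {F G : C(Z, X)} (γ : C(Z, C(I, X))) (h₀ : ∀ z, γ z 0 = F z)
    (h₁ : ∀ z, γ z 1 = G z) : F.Homotopy G where
  toContinuousMap := γ.uncurry.comp ContinuousMap.prodSwap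
  map_zero_left := h₀
  map_one_left := h₁

end ContinuousMap

theorem FundamentalGroup.fundamentalGroupMulEquivOfPath_evalAt_map {Z X : Type*}
    [TopologicalSpace Z] [TopologicalSpace X] {F G : C(Z, X)} (Γ : F.Homotopy G) (z : Z)
    (ω : FundamentalGroup Z z) :
    fundamentalGroupMulEquivOfPath (Γ.evalAt z) (map F z ω) = map G z ω :=
  NatTrans.conj_map (FundamentalGroupoidFunctor.homotopicMapsNatIso Γ) _ rfl ω

theorem exists_iso_π₁Map_conj_eq {Y X : Type} [TopologicalSpace Y] [TopologicalSpace X]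
    (f : C(Y, X)) {y p : Y} {x : X} (hf : f y = x)
    (i : FundamentalGroupoid.mk p ≅ FundamentalGroupoid.mk y) (α : FundamentalGroup Y p) :
    ∃ e : FundamentalGroupoid.mk (f p) ≅ FundamentalGroupoid.mk x,
      π₁Map f y x hf (i.conj α) = e.conj (FundamentalGroup.map f p α) :=
  ⟨_, (congrArg (eqToIso (congrArg FundamentalGroupoid.mk hf)).conj
    ((FundamentalGroupoid.map f).map_conj i α)).trans (Iso.trans_conj _ _ _).symm⟩

section

open FundamentalGroupoid

variable {X YA YB : Type} [TopologicalSpace X] [TopologicalSpace YA] [TopologicalSpace YB]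
  [PathConnectedSpace YA] [PathConnectedSpace YB] {x₀ : X}
  {A B : Subgroup (FundamentalGroup X x₀)} {yA : YA} {yB : YB} {f : C(YA, X)} {h : C(YB, X)}
  {hf : f yA = x₀} {hh : h yB = x₀}

theorem eq_one_of_fundamentalGroupMulEquivOfPath_map_eq
    (hAB : ∀ g : FundamentalGroup X x₀, Subgroup.map (MulAut.conj g).toMonoidHom A ⊓ B = ⊥)
    (hfinj : Function.Injective (π₁Map f yA x₀ hf)) (hfrange : (π₁Map f yA x₀ hf).range = A)
    (hhinj : Function.Injective (π₁Map h yB x₀ hh)) (hhrange : (π₁Map h yB x₀ hh).range = B)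
    {p : YA} {q : YB} (γ : Path (f p) (h q)) {α : FundamentalGroup YA p}
    {β : FundamentalGroup YB q}
    (hαβ : FundamentalGroup.fundamentalGroupMulEquivOfPath γ (FundamentalGroup.map f p α) =
      FundamentalGroup.map h q β) :
    α = 1 ∧ β = 1 := by
  let iA : mk p ≅ mk yA := (Groupoid.isoEquivHom _ _).symm ⟦PathConnectedSpace.somePath _ _⟧
  let iB : mk q ≅ mk yB := (Groupoid.isoEquivHom _ _).symm ⟦PathConnectedSpace.somePath _ _⟧
  obtain ⟨eA, hα⟩ := exists_iso_π₁Map_conj_eq f hf iA α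
  obtain ⟨eB, hβ⟩ := exists_iso_π₁Map_conj_eq h hh iB β
  have hconj : IsConj (π₁Map f yA x₀ hf (iA.conj α)) (π₁Map h yB x₀ hh (iB.conj β)) := by
    have := Groupoid.isConj_conj eA ((Groupoid.isoEquivHom _ _).symm ⟦γ⟧ ≪≫ eB)
      (FundamentalGroup.map f p α)
    rw [Iso.trans_conj] at this
    rwa [hα, hβ, ← hαβ]
  obtain ⟨ha, hb⟩ := Subgroup.eq_one_of_isConj_of_map_conj_inf_eq_bot hAB
    (hfrange ▸ ⟨_, rfl⟩) (hhrange ▸ ⟨_, rfl⟩) hconj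
  rw [← map_one (π₁Map f yA x₀ hf)] at ha
  rw [← map_one (π₁Map h yB x₀ hh)] at hb
  exact ⟨(map_eq_one_iff _ iA.conj.injective).1 (hfinj ha),
    (map_eq_one_iff _ iB.conj.injective).1 (hhinj hb)⟩

end

theorem stmt_17_general (X : Type) [TopologicalSpace X] (x₀ : X)
    (A B : Subgroup (FundamentalGroup X x₀))
    (hAB : ∀ g : FundamentalGroup X x₀,
      Subgroup.map (MulAut.conj g).toMonoidHom A ⊓ B = ⊥)
    (YA YB : Type) [TopologicalSpace YA] [TopologicalSpace YB]
    [PathConnectedSpace YA] [PathConnectedSpace YB]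
    (yA : YA) (yB : YB) (f : C(YA, X)) (h : C(YB, X))
    (hf : f yA = x₀) (hh : h yB = x₀)
    (hfinj : Function.Injective (π₁Map f yA x₀ hf))
    (hfrange : (π₁Map f yA x₀ hf).range = A)
    (hhinj : Function.Injective (π₁Map h yB x₀ hh))
    (hhrange : (π₁Map h yB x₀ hh).range = B)
    (U : Set (YA × YB))
    (s : C(U, {e : (YA × YB) × C(I, X) // e.2 0 = f e.1.1 ∧ e.2 1 = h e.1.2}))
    (hs : ∀ u : U, ((s u : (YA × YB) × C(I, X))).1 = (u : YA × YB))
    (φ₀ : C(Circle, U)) :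
    ∃ c : YA × YB, ((⟨Subtype.val, continuous_subtype_val⟩ : C(U, YA × YB)).comp φ₀).Homotopic
      (ContinuousMap.const Circle c) := by
  let ι : C(U, YA × YB) := ⟨Subtype.val, continuous_subtype_val⟩
  let Γ : (f.comp (ContinuousMap.fst.comp ι)).Homotopy (h.comp (ContinuousMap.snd.comp ι)) :=
    .ofPaths ⟨fun u => (s u).1.2, by fun_prop⟩
      (fun u => by show _ = f (u : YA × YB).1; rw [← hs u]; exact (s u).2.1)
      (fun u => by show _ = h (u : YA × YB).2; rw [← hs u]; exact (s u).2.2)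
  let ω : FundamentalGroup U (φ₀ 1) := ⟦Circle.stdLoop.map φ₀.continuous⟧
  obtain ⟨hα, hβ⟩ := eq_one_of_fundamentalGroupMulEquivOfPath_map_eq hAB hfinj hfrange hhinj
    hhrange (Γ.evalAt (φ₀ 1)) (α := FundamentalGroup.map (ContinuousMap.fst.comp ι) _ ω)
    (β := FundamentalGroup.map (ContinuousMap.snd.comp ι) _ ω)
    (FundamentalGroup.fundamentalGroupMulEquivOfPath_evalAt_map Γ (φ₀ 1) ω)
  obtain ⟨HA⟩ := (ContinuousMap.fst.comp (ι.comp φ₀)).homotopic_const_of_map_stdLoop_homotopic_refl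
    (Quotient.exact hα)
  obtain ⟨HB⟩ := (ContinuousMap.snd.comp (ι.comp φ₀)).homotopic_const_of_map_stdLoop_homotopic_refl
    (Quotient.exact hβ)
  exact ⟨ι (φ₀ 1), ⟨HA.prod HB⟩⟩

/-- Let `X` be a path-connected aspherical space, `A, B ≤ π₁(X, x₀)` subgroups whose
conjugates intersect trivially, and let `f : Y_A → X`, `h : Y_B → X` be based maps of
path-connected aspherical CW complexes inducing injections on fundamental groups with
images `A` and `B`.  Let `E → Y_A × Y_B` be the pullback of the free path fibration of `X`
along `f × h`.  If an open set `U ⊆ Y_A × Y_B` admits a continuous section of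
`E → Y_A × Y_B`, then every composite `S¹ → U → Y_A × Y_B` is null-homotopic. -/
theorem stmt_17 (X : Type) [TopologicalSpace X] [PathConnectedSpace X]
    (hasphX : Aspherical X) (x₀ : X)
    (A B : Subgroup (FundamentalGroup X x₀))
    (hAB : ∀ g : FundamentalGroup X x₀,
      Subgroup.map (MulAut.conj g).toMonoidHom A ⊓ B = ⊥)
    (YA YB : Type) [TopologicalSpace YA] [TopologicalSpace YB]
    [PathConnectedSpace YA] [PathConnectedSpace YB]
    (hCWA : IsCWComplex YA) (hCWB : IsCWComplex YB)
    (hasphA : Aspherical YA) (hasphB : Aspherical YB)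
    (yA : YA) (yB : YB) (f : C(YA, X)) (h : C(YB, X))
    (hf : f yA = x₀) (hh : h yB = x₀)
    (hfinj : Function.Injective (π₁Map f yA x₀ hf))
    (hfrange : (π₁Map f yA x₀ hf).range = A)
    (hhinj : Function.Injective (π₁Map h yB x₀ hh))
    (hhrange : (π₁Map h yB x₀ hh).range = B)
    (U : Set (YA × YB)) (hU : IsOpen U)
    (s : C(U, {e : (YA × YB) × C(I, X) // e.2 0 = f e.1.1 ∧ e.2 1 = h e.1.2}))
    (hs : ∀ u : U, ((s u : (YA × YB) × C(I, X))).1 = (u : YA × YB))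
    (φ₀ : C(Circle, U)) :
    ∃ c : YA × YB, ((⟨Subtype.val, continuous_subtype_val⟩ : C(U, YA × YB)).comp φ₀).Homotopic
      (ContinuousMap.const Circle c) :=
  stmt_17_general X x₀ A B hAB YA YB yA yB f h hf hh hfinj hfrange hhinj hhrange U s hs φ₀
end

section
/- Let G and H be groups and let G ∗ H be their free product, with canonical injections ι_G : G → G ∗ H and ι_H : H → G ∗ H. Then for every k ∈ G ∗ H, the conjugate of the image of G intersects the image of H trivially: k · ι_G(G) · k⁻¹ ∩ ι_H(H) = {1}. -/
/-- In the free product `G ∗ H`, every conjugate of the image of `G` intersects the image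
of `H` trivially: `k ι_G(G) k⁻¹ ∩ ι_H(H) = 1` for all `k ∈ G ∗ H`. -/
theorem stmt_19 {G H : Type*} [Group G] [Group H] (k : Monoid.Coprod G H) :
    Subgroup.map (MulAut.conj k).toMonoidHom
        (Monoid.Coprod.inl : G →* Monoid.Coprod G H).range ⊓
      (Monoid.Coprod.inr : H →* Monoid.Coprod G H).range = ⊥ := by
  ext x
  simp only [Subgroup.mem_inf, Subgroup.mem_bot, Subgroup.mem_map, MonoidHom.mem_range]
  constructor
  · rintro ⟨⟨-, ⟨g, rfl⟩, rfl⟩, h, hh⟩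
    have := congrArg (Monoid.Coprod.lift (1 : G →* H) (MonoidHom.id H)) hh
    simp only [MulEquiv.coe_toMonoidHom, MulAut.conj_apply, map_mul, map_inv,
      Monoid.Coprod.lift_apply_inl, Monoid.Coprod.lift_apply_inr, MonoidHom.one_apply,
      MonoidHom.id_apply, mul_one, mul_inv_cancel] at this
    rw [← hh, this, map_one]
  · rintro rfl
    exact ⟨⟨1, ⟨1, by simp⟩, by simp⟩, 1, by simp⟩
end
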